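/- For every integer m ≥ 3, if μ ∈ Opt(m), then μ̄(x) > 1.593/m for every x ∈ supp μ̄, and consequently |supp μ̄| < 1.256·m. -/

import Mathlib

/-!
Write `S(μ)` (`cycleSum`) for the sum of `μ(C)` over labelled injective `m`-cycles, so that
`β(μ; m) = S(μ)/(2m)`, and `S_x(μ)` (`cycleSumThrough`) for the part coming from cycles through `x`.
At an optimal `μ`, moving mass from an edge `a` with `μ(a) > 0` to any edge `b` cannot increase `S`,
so `∂S/∂μ(b) ≤ ∂S/∂μ(a)`: the partial derivatives agree on the support of `μ`, and Euler's identity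
for the `m`-homogeneous `S` identifies their common value as `m S`. Summing `μ(e) ∂S/∂μ(e)` over the
edges at `x` counts every cycle through `x` twice, whence `2 S_x = m S μ̄(x)`. On the other hand,
deleting `x` and rescaling the remaining mass by `1/(1 - μ̄(x))` gives another probability mass, so
`S - S_x ≤ (1 - μ̄(x))^m S`. Together these give `1 - e^{-s} ≤ s/2` for `s = m μ̄(x)`, which forces
`s > 1.593`; the bound on the support then follows from `∑_x μ̄(x) = 2`.
-/

open Finset

/-- The cyclic successor of an index in `Fin m`. -/
def cnext {m : ℕ} (i : Fin m) : Fin m := ⟨(i.1 + 1) % m, Nat.mod_lt _ i.pos⟩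

/-- `μ` is a probability mass on the 2-element subsets of `X`: it is nonnegative,
vanishes on the diagonal, and has total mass 1. -/
def IsProbMass {X : Type*} [Fintype X] [DecidableEq X] (μ : Sym2 X → ℝ) : Prop :=
  (∀ e, 0 ≤ μ e) ∧ (∀ e : Sym2 X, e.IsDiag → μ e = 0) ∧ (∑ e : Sym2 X, μ e) = 1

/-- The weight `μ(C)` of the labeled cycle `f 0, f 1, ..., f (m-1), f 0`. -/
def cycleWeight {X : Type*} (μ : Sym2 X → ℝ) {m : ℕ} (f : Fin m → X) : ℝ :=
  ∏ i : Fin m, μ s(f i, f (cnext i))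

/-- `β(μ; m)`: the sum of `μ(C)` over all unlabeled `m`-cycles `C` in the complete
graph on `X`, computed as the sum over labeled cycles divided by `2m` (each unlabeled
`m`-cycle has exactly `2m` labelings). -/
noncomputable def beta {X : Type*} [Fintype X] [DecidableEq X] (μ : Sym2 X → ℝ) (m : ℕ) : ℝ :=
  (∑ f : Fin m → X, if Function.Injective f then cycleWeight μ f else 0) / (2 * m)

/-- `β(m)`: the supremum of `β(μ; m)` over all probability masses `μ` on the
2-element subsets of a finite set (every finite set being a copy of some `Fin n`). -/
noncomputable def betaSup (m : ℕ) : ℝ :=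
  sSup {b : ℝ | ∃ (n : ℕ) (μ : Sym2 (Fin n) → ℝ), IsProbMass μ ∧ b = beta μ m}

/-- The weighted degree `μ̄(x) = ∑_{y ≠ x} μ(xy)`. -/
noncomputable def wdeg {X : Type*} [Fintype X] [DecidableEq X] (μ : Sym2 X → ℝ) (x : X) : ℝ :=
  ∑ y ∈ Finset.univ.filter (· ≠ x), μ s(x, y)

/-- The support graph `G_μ`, whose edges are the pairs of positive mass. -/
def supportGraph {X : Type*} (μ : Sym2 X → ℝ) : SimpleGraph X where
  Adj x y := x ≠ y ∧ 0 < μ s(x, y)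
  symm := ⟨fun x y h => ⟨h.1.symm, by rw [Sym2.eq_swap]; exact h.2⟩⟩
  loopless := ⟨fun x h => h.1 rfl⟩

open Function

lemma cnext_eq_finRotate {m : ℕ} (i : Fin m) : cnext i = finRotate m i := by
  obtain ⟨n, rfl⟩ := Nat.exists_eq_succ_of_ne_zero i.pos.ne'
  ext
  simp [cnext, Fin.val_add]

lemma cnext_ne {m : ℕ} (hm : 2 ≤ m) (i : Fin m) : cnext i ≠ i := by
  rw [cnext_eq_finRotate, ← Equiv.Perm.mem_support, support_finRotate_of_le hm]
  exact mem_univ i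

lemma card_filter_apply_eq_of_injective {ι X : Type*} [Fintype ι] [DecidableEq X] {f : ι → X}
    (hf : Injective f) (x : X) : #{i | f i = x} = if ∃ i, f i = x then 1 else 0 := by
  split_ifs with h
  · obtain ⟨i, rfl⟩ := h
    exact card_eq_one.2 ⟨i, by ext j; simp [hf.eq_iff]⟩
  · simpa using h

def cycleEdge {X : Type*} {m : ℕ} (f : Fin m → X) (i : Fin m) : Sym2 X := s(f i, f (cnext i))

lemma card_filter_mem_cycleEdge {X : Type*} [DecidableEq X] {m : ℕ} (hm : 2 ≤ m)
    {f : Fin m → X} (hf : Injective f) (x : X) :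
    #{i | x ∈ cycleEdge f i} = 2 * #{i | f i = x} := by
  let leaving : Finset (Fin m) := {i | f i = x}
  let entering : Finset (Fin m) := {i | f (cnext i) = x}
  have hsplit : ({i | x ∈ cycleEdge f i} : Finset (Fin m)) = leaving ∪ entering := by
    ext i; simp [leaving, entering, cycleEdge, Sym2.mem_iff, eq_comm]
  have hdisj : Disjoint leaving entering := by
    rw [disjoint_filter]
    rintro i - rfl h
    exact cnext_ne hm i (hf h)
  have hrot : #entering = #leaving :=
    card_equiv (finRotate m) fun i => by simp [leaving, entering, cnext_eq_finRotate]
  rw [hsplit, card_union_of_disjoint hdisj, hrot, two_mul]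

section CycleSums

variable {X : Type*} [Fintype X] [DecidableEq X] {m : ℕ}

noncomputable def cycleSum (μ : Sym2 X → ℝ) (m : ℕ) : ℝ :=
  ∑ f : Fin m → X with Injective f, cycleWeight μ f

noncomputable def cycleSumThrough (μ : Sym2 X → ℝ) (m : ℕ) (x : X) : ℝ :=
  ∑ f : Fin m → X with Injective f ∧ ∃ i, f i = x, cycleWeight μ f

noncomputable def cycleSumPartialDeriv (μ : Sym2 X → ℝ) (m : ℕ) (c : Sym2 X) : ℝ :=
  ∑ f : Fin m → X with Injective f,
    ∑ i, if cycleEdge f i = c then ∏ j ∈ univ.erase i, μ (cycleEdge f j) else 0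

def deleteVertex (μ : Sym2 X → ℝ) (x : X) (e : Sym2 X) : ℝ := if x ∈ e then 0 else μ e

lemma beta_eq_cycleSum (μ : Sym2 X → ℝ) (m : ℕ) : beta μ m = cycleSum μ m / (2 * m) := by
  rw [beta, cycleSum, sum_filter]

lemma cycleSum_nonneg {μ : Sym2 X → ℝ} (h : ∀ e, 0 ≤ μ e) (m : ℕ) : 0 ≤ cycleSum μ m :=
  sum_nonneg fun _ _ => prod_nonneg fun _ _ => h _

lemma cycleSum_smul (a : ℝ) (μ : Sym2 X → ℝ) (m : ℕ) :
    cycleSum (a • μ) m = a ^ m * cycleSum μ m := by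
  simp [cycleSum, cycleWeight, prod_mul_distrib, mul_sum]

lemma sum_mul_cycleSumPartialDeriv (μ w : Sym2 X → ℝ) (m : ℕ) :
    ∑ c, w c * cycleSumPartialDeriv μ m c = ∑ f : Fin m → X with Injective f,
      ∑ i, w (cycleEdge f i) * ∏ j ∈ univ.erase i, μ (cycleEdge f j) := by
  simp_rw [cycleSumPartialDeriv, mul_sum]
  rw [sum_comm]
  refine sum_congr rfl fun f _ => ?_
  rw [sum_comm]
  simp [mul_ite]

lemma hasDerivAt_cycleSum_add_smul (μ w : Sym2 X → ℝ) (m : ℕ) :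
    HasDerivAt (fun t : ℝ => cycleSum (μ + t • w) m)
      (∑ c, w c * cycleSumPartialDeriv μ m c) 0 := by
  rw [sum_mul_cycleSumPartialDeriv]
  refine HasDerivAt.fun_sum fun f _ => ?_
  have h := HasDerivAt.fun_finsetProd (u := univ) (x := 0) fun i _ =>
    ((hasDerivAt_id (0 : ℝ)).mul_const (w (cycleEdge f i))).const_add (μ (cycleEdge f i))
  simpa [cycleWeight, cycleEdge, mul_comm] using h

lemma sum_mul_cycleSumPartialDeriv_self (μ : Sym2 X → ℝ) (m : ℕ) :
    ∑ c, μ c * cycleSumPartialDeriv μ m c = m * cycleSum μ m := by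
  rw [sum_mul_cycleSumPartialDeriv, cycleSum, mul_sum]
  refine sum_congr rfl fun f _ => ?_
  simp_rw [mul_prod_erase univ (fun j => μ (cycleEdge f j)) (mem_univ _)]
  simp [cycleWeight, cycleEdge]

lemma sum_mem_mul_cycleSumPartialDeriv (hm : 2 ≤ m) (μ : Sym2 X → ℝ) (x : X) :
    ∑ c with x ∈ c, μ c * cycleSumPartialDeriv μ m c = 2 * cycleSumThrough μ m x := by
  have h := sum_mul_cycleSumPartialDeriv μ (fun c => if x ∈ c then μ c else 0) m
  simp only [ite_mul, zero_mul, ← sum_filter] at h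
  rw [h, cycleSumThrough, ← filter_filter, sum_filter (fun f : Fin m → X => ∃ i, f i = x),
    mul_sum]
  refine sum_congr rfl fun f hf => ?_
  have hf : Injective f := (mem_filter.1 hf).2
  simp_rw [mul_prod_erase univ (fun j => μ (cycleEdge f j)) (mem_univ _), sum_const,
    card_filter_mem_cycleEdge hm hf, card_filter_apply_eq_of_injective hf]
  split_ifs <;> simp [cycleWeight, cycleEdge]

lemma sum_deleteVertex (μ : Sym2 X → ℝ) (x : X) :
    ∑ e, deleteVertex μ x e = ∑ e, μ e - ∑ e with x ∈ e, μ e := by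
  rw [eq_sub_iff_add_eq, ← sum_filter_add_sum_filter_not univ (x ∈ ·) μ, add_comm]
  simp [deleteVertex, sum_ite]

lemma cycleSum_deleteVertex (μ : Sym2 X → ℝ) (m : ℕ) (x : X) :
    cycleSum (deleteVertex μ x) m = cycleSum μ m - cycleSumThrough μ m x := by
  rw [cycleSum, cycleSum, cycleSumThrough, ← filter_filter,
    ← sum_filter_add_sum_filter_not _ (fun f : Fin m → X => ∃ i, f i = x),
    ← sum_filter_add_sum_filter_not _ (fun f : Fin m → X => ∃ i, f i = x) (cycleWeight μ),
    add_sub_cancel_left, sum_eq_zero, zero_add]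
  · refine sum_congr rfl fun f hf => prod_congr rfl fun i _ => ?_
    have hx : ∀ j, x ≠ f j := by simpa [eq_comm] using (mem_filter.1 hf).2
    simp [deleteVertex, hx]
  · intro f hf
    obtain ⟨i, hi⟩ := (mem_filter.1 hf).2
    exact prod_eq_zero (mem_univ i) (by simp [deleteVertex, hi])

lemma sum_mem_eq_sum_sym2Mk (μ : Sym2 X → ℝ) (x : X) :
    ∑ e with x ∈ e, μ e = ∑ y, μ s(x, y) := by
  have himage : ({e | x ∈ e} : Finset (Sym2 X)) = univ.image fun y => s(x, y) := by
    ext e; simp [Sym2.mem_iff_exists, eq_comm]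
  rw [himage, sum_image fun y _ z _ h => Sym2.congr_right.1 h]

lemma wdeg_eq_sum {μ : Sym2 X → ℝ} {x : X} (hx : μ s(x, x) = 0) :
    wdeg μ x = ∑ y, μ s(x, y) := by
  rw [wdeg, filter_ne', sum_erase (f := fun y => μ s(x, y)) univ hx]

lemma sum_sym2Mk_eq_two_mul {μ : Sym2 X → ℝ} (hdiag : ∀ e : Sym2 X, e.IsDiag → μ e = 0) :
    ∑ p : X × X, μ s(p.1, p.2) = 2 * ∑ e, μ e := by
  rw [← sum_fiberwise univ (fun p : X × X => s(p.1, p.2)), mul_sum]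
  refine sum_congr rfl fun e _ => ?_
  induction e using Sym2.inductionOn with
  | hf a b =>
    rw [sum_congr rfl fun p hp => congrArg μ (mem_filter.1 hp).2, sum_const, nsmul_eq_mul]
    by_cases hab : a = b
    · simp [hab, hdiag]
    · have hfiber : ({p | s(p.1, p.2) = s(a, b)} : Finset (X × X)) = {(a, b), (b, a)} := by
        ext ⟨u, v⟩; simp
      rw [hfiber, card_pair (by simp [hab])]
      push_cast; ring

lemma beta_comp_sym2Map {Y : Type*} [Fintype Y] [DecidableEq Y] (μ : Sym2 X → ℝ) (e : Y ≃ X)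
    (m : ℕ) : beta (μ ∘ Sym2.map e) m = beta μ m := by
  rw [beta, beta]
  congr 1
  refine Fintype.sum_equiv ((Equiv.refl (Fin m)).arrowCongr e) _ _ fun f => ?_
  rw [show (Equiv.refl (Fin m)).arrowCongr e f = e ∘ f from rfl]
  simp only [e.injective.of_comp_iff]
  rfl

end CycleSums

namespace IsProbMass

variable {X : Type*} [Fintype X] [DecidableEq X] {μ : Sym2 X → ℝ}

lemma not_isDiag (hμ : IsProbMass μ) {e : Sym2 X} (he : 0 < μ e) : ¬ e.IsDiag :=
  fun hd => he.ne' (hμ.2.1 e hd)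

lemma wdeg_nonneg (hμ : IsProbMass μ) (x : X) : 0 ≤ wdeg μ x :=
  sum_nonneg fun _ _ => hμ.1 _

lemma wdeg_eq_sum_mem (hμ : IsProbMass μ) (x : X) : wdeg μ x = ∑ e with x ∈ e, μ e := by
  rw [sum_mem_eq_sum_sym2Mk, wdeg_eq_sum (hμ.2.1 _ (Sym2.mk_isDiag_iff.2 rfl))]

lemma sum_wdeg (hμ : IsProbMass μ) : ∑ x, wdeg μ x = 2 := by
  simp_rw [fun x => wdeg_eq_sum (hμ.2.1 s(x, x) (Sym2.mk_isDiag_iff.2 rfl))]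
  rw [← Fintype.sum_prod_type', sum_sym2Mk_eq_two_mul hμ.2.1, hμ.2.2, mul_one]

lemma cycleSum_le_two_pow (hμ : IsProbMass μ) (m : ℕ) : cycleSum μ m ≤ 2 ^ m := by
  let pairs : (Fin m → X) → Fin m → X × X := fun f i => (f i, f (cnext i))
  have hpairs : Injective pairs := fun f g h => funext fun i => congrArg Prod.fst (congrFun h i)
  calc cycleSum μ m ≤ ∑ f : Fin m → X, cycleWeight μ f :=
        sum_le_sum_of_subset_of_nonneg (filter_subset _ _) fun _ _ _ =>
          prod_nonneg fun _ _ => hμ.1 _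
    _ = ∑ q ∈ univ.image pairs, ∏ i, μ s((q i).1, (q i).2) :=
        (sum_image (f := fun q => ∏ i, μ s((q i).1, (q i).2)) fun f _ g _ h => hpairs h).symm
    _ ≤ ∑ q : Fin m → X × X, ∏ i, μ s((q i).1, (q i).2) :=
        sum_le_sum_of_subset_of_nonneg (subset_univ _) fun _ _ _ =>
          prod_nonneg fun _ _ => hμ.1 _
    _ = (∑ p : X × X, μ s(p.1, p.2)) ^ m :=
        (Fintype.sum_pow (fun p : X × X => μ s(p.1, p.2)) m).symm
    _ = 2 ^ m := by rw [sum_sym2Mk_eq_two_mul hμ.2.1, hμ.2.2, mul_one]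

lemma beta_le_two_pow (hμ : IsProbMass μ) (m : ℕ) : beta μ m ≤ 2 ^ m := by
  rw [beta_eq_cycleSum]
  rcases Nat.eq_zero_or_pos m with rfl | hm
  · simp
  · exact (div_le_self (cycleSum_nonneg hμ.1 m) (by norm_cast; omega)).trans
      (hμ.cycleSum_le_two_pow m)

lemma comp_sym2Map (hμ : IsProbMass μ) {Y : Type*} [Fintype Y] [DecidableEq Y] (e : Y ≃ X) :
    IsProbMass (μ ∘ Sym2.map e) := by
  have hbij : Bijective (Sym2.map e) :=
    ⟨Sym2.map.injective e.injective, fun z => ⟨Sym2.map e.symm z, by simp [Sym2.map_map]⟩⟩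
  exact ⟨fun _ => hμ.1 _, fun z hz => hμ.2.1 _ ((Sym2.isDiag_map e.injective).2 hz),
    (hbij.sum_comp μ).trans hμ.2.2⟩

lemma beta_le_betaSup (hμ : IsProbMass μ) (m : ℕ) : beta μ m ≤ betaSup m := by
  let e := (Fintype.equivFin X).symm
  rw [← beta_comp_sym2Map μ e]
  exact le_csSup ⟨2 ^ m, by rintro _ ⟨n, ν, hν, rfl⟩; exact hν.beta_le_two_pow m⟩
    ⟨_, _, hμ.comp_sym2Map e, rfl⟩

lemma smul_deleteVertex (hμ : IsProbMass μ) {x : X} (hx : wdeg μ x < 1) :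
    IsProbMass ((1 - wdeg μ x)⁻¹ • deleteVertex μ x) := by
  have hpos : 0 < 1 - wdeg μ x := by linarith
  refine ⟨fun e => ?_, fun e he => ?_, ?_⟩
  · refine mul_nonneg (inv_nonneg.2 hpos.le) ?_
    unfold deleteVertex
    split_ifs
    exacts [le_rfl, hμ.1 e]
  · simp [deleteVertex, hμ.2.1 e he]
  · simp only [Pi.smul_apply, smul_eq_mul, ← mul_sum]
    rw [sum_deleteVertex, hμ.2.2, ← hμ.wdeg_eq_sum_mem, inv_mul_cancel₀ hpos.ne']

end IsProbMass

lemma betaSup_pos {m : ℕ} (hm : 2 ≤ m) : 0 < betaSup m := by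
  let N := #({e | ¬ e.IsDiag} : Finset (Sym2 (Fin m)))
  let μ₀ : Sym2 (Fin m) → ℝ := fun e => if e.IsDiag then 0 else (N : ℝ)⁻¹
  have hN : 0 < N := card_pos.2 ⟨s(⟨0, by omega⟩, ⟨1, by omega⟩), by simp⟩
  have hμ₀ : IsProbMass μ₀ := by
    refine ⟨fun e => ?_, fun e he => if_pos he, ?_⟩
    · unfold μ₀; split_ifs <;> positivity
    · rw [sum_ite, sum_const_zero, zero_add, sum_const, nsmul_eq_mul]
      exact mul_inv_cancel₀ (by positivity)
  have hid : 0 < cycleWeight μ₀ (id : Fin m → Fin m) :=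
    prod_pos fun i _ => by simp [μ₀, (cnext_ne hm i).symm, hN]
  calc 0 < beta μ₀ m := by
        rw [beta_eq_cycleSum]
        refine div_pos (hid.trans_le (single_le_sum (fun f _ => ?_) ?_)) (by positivity)
        · exact prod_nonneg fun _ _ => hμ₀.1 _
        · simpa using injective_id
    _ ≤ betaSup m := hμ₀.beta_le_betaSup m

lemma HasDerivAt.nonpos_of_isMaxOn_Icc {f : ℝ → ℝ} {f' ε : ℝ} (hf : HasDerivAt f f' 0)
    (hε : 0 < ε) (hmax : IsMaxOn f (Set.Icc 0 ε) 0) : f' ≤ 0 := by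
  have hseg : segment ℝ 0 (0 + ε) ⊆ Set.Icc 0 ε := by rw [zero_add, segment_eq_Icc hε.le]
  have h := hmax.localize.hasFDerivWithinAt_nonpos hf.hasFDerivAt.hasFDerivWithinAt
    (mem_posTangentConeAt_of_segment_subset hseg)
  simp only [ContinuousLinearMap.toSpanSingleton_apply, smul_eq_mul] at h
  exact le_of_not_gt fun hf' => (mul_pos hε hf').not_ge h

/-- `1.593` lies just below the positive root `s ≈ 1.5936` of `1 - e^{-s} = s/2`. -/
lemma lt_of_one_sub_exp_neg_le_half {s : ℝ} (hs : 0 < s) (h : 1 - Real.exp (-s) ≤ s / 2) :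
    1.593 < s := by
  by_contra! hle
  have hE : Real.exp (-1.593) < 1 - 1.593 / 2 := by
    have h8 := Real.sum_le_exp_of_nonneg (x := 1.593) (by norm_num) 8
    simp only [sum_range_succ, sum_range_zero, Nat.factorial] at h8
    rw [Real.exp_neg, inv_lt_comm₀ (Real.exp_pos _) (by norm_num)]
    norm_num at h8 ⊢
    linarith
  have hchord := convexOn_exp.2 (Set.mem_univ (-1.593)) (Set.mem_univ 0)
    (show 0 ≤ s / 1.593 by positivity)
    (show 0 ≤ 1 - s / 1.593 by rw [sub_nonneg, div_le_one (by norm_num)]; exact hle)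
    (add_sub_cancel _ 1)
  have harg : (s / 1.593) • (-1.593 : ℝ) + (1 - s / 1.593) • (0 : ℝ) = -s := by
    simp only [smul_eq_mul]; ring
  rw [harg, smul_eq_mul, smul_eq_mul, Real.exp_zero, mul_one] at hchord
  have hgap := mul_pos (div_pos hs (by norm_num : (0 : ℝ) < 1.593)) (sub_pos.2 hE)
  ring_nf at h hchord hgap
  linarith

section Optimal

variable {X : Type*} [Fintype X] [DecidableEq X] {m : ℕ} {μ : Sym2 X → ℝ}

lemma cycleSum_le_of_beta_eq_betaSup (hm : 0 < m) (hopt : beta μ m = betaSup m)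
    {ν : Sym2 X → ℝ} (hν : IsProbMass ν) : cycleSum ν m ≤ cycleSum μ m := by
  have h := hopt ▸ hν.beta_le_betaSup m
  rwa [beta_eq_cycleSum, beta_eq_cycleSum, div_le_div_iff_of_pos_right (by positivity)] at h

lemma cycleSum_pos_of_beta_eq_betaSup (hm : 2 ≤ m) (hopt : beta μ m = betaSup m) :
    0 < cycleSum μ m := by
  have h := hopt ▸ betaSup_pos hm
  rw [beta_eq_cycleSum] at h
  exact (div_pos_iff_of_pos_right (by positivity)).1 h

lemma cycleSumPartialDeriv_le_of_beta_eq_betaSup (hm : 0 < m) (hμ : IsProbMass μ)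
    (hopt : beta μ m = betaSup m) {a b : Sym2 X} (ha : 0 < μ a) (hb : ¬ b.IsDiag) :
    cycleSumPartialDeriv μ m b ≤ cycleSumPartialDeriv μ m a := by
  let w : Sym2 X → ℝ := Pi.single b 1 - Pi.single a 1
  have hw : ∑ c, w c * cycleSumPartialDeriv μ m c =
      cycleSumPartialDeriv μ m b - cycleSumPartialDeriv μ m a := by
    simp [w, sub_mul, sum_sub_distrib, Pi.single_apply]
  have hprob : ∀ t ∈ Set.Icc 0 (μ a), IsProbMass (μ + t • w) := by
    rintro t ⟨ht0, hta⟩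
    refine ⟨fun e => ?_, fun e he => ?_, ?_⟩
    · simp only [w, Pi.add_apply, Pi.smul_apply, Pi.sub_apply, smul_eq_mul, Pi.single_apply]
      split_ifs <;> subst_vars <;> nlinarith [hμ.1 e]
    · have hea : e ≠ a := by rintro rfl; exact hμ.not_isDiag ha he
      have heb : e ≠ b := by rintro rfl; exact hb he
      simp [w, hea, heb, hμ.2.1 e he]
    · simp [w, sum_add_distrib, ← mul_sum, sum_sub_distrib, hμ.2.2]
  have hmax : IsMaxOn (fun t : ℝ => cycleSum (μ + t • w) m) (Set.Icc 0 (μ a)) 0 :=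
    isMaxOn_iff.2 fun t ht => by
      simpa using cycleSum_le_of_beta_eq_betaSup hm hopt (hprob t ht)
  have hderiv := (hasDerivAt_cycleSum_add_smul μ w m).nonpos_of_isMaxOn_Icc ha hmax
  linarith

lemma cycleSumPartialDeriv_eq_of_beta_eq_betaSup (hm : 0 < m) (hμ : IsProbMass μ)
    (hopt : beta μ m = betaSup m) {c : Sym2 X} (hc : 0 < μ c) :
    cycleSumPartialDeriv μ m c = m * cycleSum μ m := by
  have hconst : ∀ e, μ e * cycleSumPartialDeriv μ m e = μ e * cycleSumPartialDeriv μ m c := by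
    intro e
    rcases (hμ.1 e).eq_or_lt with he | he
    · simp [← he]
    · rw [le_antisymm
        (cycleSumPartialDeriv_le_of_beta_eq_betaSup hm hμ hopt he (hμ.not_isDiag hc))
        (cycleSumPartialDeriv_le_of_beta_eq_betaSup hm hμ hopt hc (hμ.not_isDiag he))]
  rw [← sum_mul_cycleSumPartialDeriv_self, sum_congr rfl fun e _ => hconst e, ← sum_mul,
    hμ.2.2, one_mul]

lemma two_mul_cycleSumThrough_of_beta_eq_betaSup (hm : 2 ≤ m) (hμ : IsProbMass μ)
    (hopt : beta μ m = betaSup m) (x : X) :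
    2 * cycleSumThrough μ m x = m * cycleSum μ m * wdeg μ x := by
  rw [← sum_mem_mul_cycleSumPartialDeriv hm, hμ.wdeg_eq_sum_mem, mul_sum]
  refine sum_congr rfl fun e _ => ?_
  rcases (hμ.1 e).eq_or_lt with he | he
  · simp [← he]
  · rw [cycleSumPartialDeriv_eq_of_beta_eq_betaSup (by omega) hμ hopt he]
    ring

lemma cycleSum_sub_cycleSumThrough_le_of_beta_eq_betaSup (hm : 0 < m) (hμ : IsProbMass μ)
    (hopt : beta μ m = betaSup m) {x : X} (hx : wdeg μ x < 1) :
    cycleSum μ m - cycleSumThrough μ m x ≤ (1 - wdeg μ x) ^ m * cycleSum μ m := by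
  have h := cycleSum_le_of_beta_eq_betaSup hm hopt (hμ.smul_deleteVertex hx)
  rwa [cycleSum_smul, cycleSum_deleteVertex, inv_pow,
    inv_mul_le_iff₀ (pow_pos (by linarith) m)] at h

lemma lt_mul_wdeg_of_beta_eq_betaSup (hm : 2 ≤ m) (hμ : IsProbMass μ)
    (hopt : beta μ m = betaSup m) {x : X} (hx0 : 0 < wdeg μ x) (hx1 : wdeg μ x < 1) :
    1.593 < m * wdeg μ x := by
  have hS := cycleSum_pos_of_beta_eq_betaSup hm hopt
  have hthrough := two_mul_cycleSumThrough_of_beta_eq_betaSup hm hμ hopt x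
  have hdelete := cycleSum_sub_cycleSumThrough_le_of_beta_eq_betaSup (by omega) hμ hopt hx1
  have hmR : (0 : ℝ) < m := by positivity
  have hexp : (1 - wdeg μ x) ^ m ≤ Real.exp (-(m * wdeg μ x)) := by
    have h := Real.one_sub_div_pow_le_exp_neg (n := m) (t := m * wdeg μ x) (by nlinarith)
    rwa [mul_div_cancel_left₀ _ hmR.ne'] at h
  have h : (1 - (1 - wdeg μ x) ^ m) * cycleSum μ m ≤ m * wdeg μ x / 2 * cycleSum μ m := by
    linarith
  refine lt_of_one_sub_exp_neg_le_half (by positivity) ?_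
  linarith [le_of_mul_le_mul_right h hS]

end Optimal

/-- For every `m ≥ 3` and `μ ∈ Opt(m)`: `μ̄(x) > 1.593/m` for every `x ∈ supp μ̄`, hence
`|supp μ̄| < 1.256·m`. -/
theorem opt_general (m : ℕ) (hm : 3 ≤ m) {X : Type*} [Fintype X] [DecidableEq X]
    (μ : Sym2 X → ℝ) (hμ : IsProbMass μ) (hopt : beta μ m = betaSup m) :
    (∀ x : X, 0 < wdeg μ x → 1.593 / m < wdeg μ x) ∧
    ({x : X | 0 < wdeg μ x}.ncard : ℝ) < 1.256 * m := by
  have hmR : (3 : ℝ) ≤ m := by exact_mod_cast hm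
  have hdeg : ∀ x : X, 0 < wdeg μ x → 1.593 / m < wdeg μ x := by
    intro x hx
    rw [div_lt_iff₀ (by positivity), mul_comm]
    rcases lt_or_ge (wdeg μ x) 1 with hx1 | hx1
    · exact lt_mul_wdeg_of_beta_eq_betaSup (by omega) hμ hopt hx hx1
    · nlinarith
  refine ⟨hdeg, ?_⟩
  have hcard := card_nsmul_le_sum {x | 0 < wdeg μ x} (wdeg μ) (1.593 / m)
    fun x hx => (hdeg x (mem_filter.1 hx).2).le
  have hsum : ∑ x with 0 < wdeg μ x, wdeg μ x ≤ 2 :=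
    hμ.sum_wdeg ▸ sum_le_sum_of_subset_of_nonneg (filter_subset _ _) fun x _ _ =>
      hμ.wdeg_nonneg x
  rw [nsmul_eq_mul, mul_div_assoc', div_le_iff₀ (by positivity)] at hcard
  rw [Set.ncard_eq_toFinset_card', Set.toFinset_ofPred]
  nlinarith [mul_le_mul_of_nonneg_right hsum (by positivity : (0 : ℝ) ≤ m)]
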